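/- arXiv:0901.1397 — 6 statements merged into one kernel-verified Lean document; each statement's English description precedes it below -/
import Mathlib

section
/- The morphism γ : ℕ* → ℕ* defined on letters by γ(i) = 0·(i+1) is a squarefree morphism: for every finite word w over ℕ, if w is squarefree then γ(w) is squarefree. -/
/-- The morphism γ : ℕ* → ℕ* with γ(i) = 0·(i+1), applied letterwise to a word. -/
def gammaW (w : List ℕ) : List ℕ := (w.map fun i => [0, i + 1]).flatten

/-- A word over ℕ is squarefree if no nonempty word `x` is such that `xx` is a
factor (contiguous subword) of it. -/
def SquarefreeWord (w : List ℕ) : Prop := ∀ x : List ℕ, x ≠ [] → ¬ (x ++ x) <:+: w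

lemma gammaW_cons (a : ℕ) (w : List ℕ) : gammaW (a :: w) = 0 :: (a+1) :: gammaW w := by
  simp [gammaW]

lemma gammaW_length (w : List ℕ) : (gammaW w).length = 2 * w.length := by
  induction w with
  | nil => simp [gammaW]
  | cons a w ih => simp [gammaW_cons, ih]; omega

lemma gammaW_getD (w : List ℕ) : ∀ i, i < 2 * w.length →
    (gammaW w).getD i 0 = if i % 2 = 0 then 0 else w.getD (i/2) 0 + 1 := by
  induction w with
  | nil => simp
  | cons a w ih =>
    intro i hi
    match i with
    | 0 => simp [gammaW_cons]
    | 1 => simp [gammaW_cons]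
    | (k+2) =>
      have hk : k < 2 * w.length := by simp at hi; omega
      have h2 : (k+2) % 2 = k % 2 := by omega
      have h3 : (k+2) / 2 = k / 2 + 1 := by omega
      simp only [gammaW_cons, List.getD_cons_succ, ih k hk, h2, h3]

/-- The morphism γ(i) = 0·(i+1) is a squarefree morphism. -/
theorem gamma_squarefree (w : List ℕ) (hw : SquarefreeWord w) :
    SquarefreeWord (gammaW w) := by
  intro x hx ⟨s, t, hst⟩
  set n := x.length with hn
  set p := s.length with hp
  have hnpos : 1 ≤ n := by
    cases x with
    | nil => exact absurd rfl hx
    | cons a y => simp [hn]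
  have hlen : p + (n + n) + t.length = 2 * w.length := by
    have h := congrArg List.length hst
    simp [gammaW_length, hp, hn] at h
    omega
  -- value of gammaW w at position p + i is x.getD i 0, for i < n; same at p+n+i
  have hval : ∀ i, i < n → (gammaW w).getD (p + i) 0 = x.getD i 0 ∧
      (gammaW w).getD (p + n + i) 0 = x.getD i 0 := by
    intro i hi
    rw [← hst]
    rw [List.append_assoc, List.append_assoc]
    constructor
    · rw [List.getD_append_right _ _ _ _ (by omega), Nat.add_sub_cancel_left,
        List.getD_append _ _ _ _ (by omega)]
    · rw [List.getD_append_right _ _ _ _ (by omega)]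
      have : p + n + i - p = n + i := by omega
      rw [this, List.getD_append_right _ _ _ _ (by omega), Nat.add_sub_cancel_left,
        List.getD_append _ _ _ _ (by omega)]
  have heq : ∀ i, i < n → (gammaW w).getD (p + i) 0 = (gammaW w).getD (p + n + i) 0 := by
    intro i hi
    rw [(hval i hi).1, (hval i hi).2]
  -- n must be even
  have hbound : p + n + n ≤ 2 * w.length := by omega
  by_cases hpar : n % 2 = 1
  · -- odd length: position p and p+n have different parities
    have h0 := heq 0 hnpos
    rw [Nat.add_zero, Nat.add_zero] at h0
    rw [gammaW_getD w _ (by omega), gammaW_getD w _ (by omega)] at h0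
    rcases Nat.mod_two_eq_zero_or_one p with hp2 | hp2
    · have e2 : (p + n) % 2 = 1 := by omega
      simp [hp2, e2] at h0
    · have e2 : (p + n) % 2 = 0 := by omega
      simp [hp2, e2] at h0
  · have hpar' : n % 2 = 0 := by omega
    set m := n / 2 with hm
    have hmpos : 1 ≤ m := by omega
    set q := p / 2 with hq
    have hq2m : q + 2 * m ≤ w.length := by omega
    have hww : ∀ j, j < m → w.getD (q + j) 0 = w.getD (q + m + j) 0 := by
      intro j hj
      set i := 2 * j + (p + 1) % 2 with hi
      have hin : i < n := by omega
      have h1 : (p + i) % 2 = 1 := by omega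
      have h2 : (p + i) / 2 = q + j := by omega
      have h3 : (p + n + i) % 2 = 1 := by omega
      have h4 : (p + n + i) / 2 = q + m + j := by omega
      have := heq i hin
      rw [gammaW_getD w _ (by omega), gammaW_getD w _ (by omega), h1, h2, h3, h4] at this
      simpa using this
    -- build the square in w
    set u := (w.drop q).take m with hu
    have hulen : u.length = m := by simp [hu]; omega
    have hune : u ≠ [] := by
      intro h; rw [h] at hulen; simp at hulen; omega
    apply hw u hune
    have huu : u ++ u = (w.drop q).take (2 * m) := by
      apply List.ext_getElem
      · simp [hulen]; omega
      · intro j hj hj'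
        have hj2 : j < 2 * m := by rw [List.length_append, hulen] at hj; omega
        have hgw : ∀ k (hk : k < 2 * m), ((w.drop q).take (2*m))[k]'(by simp; omega) = w.getD (q + k) 0 := by
          intro k hk
          rw [List.getElem_take, List.getElem_drop, List.getD_eq_getElem _ _ (by omega)]
        have hgu : ∀ k (hk : k < m), u[k]'(by omega) = w.getD (q + k) 0 := by
          intro k hk
          simp only [hu]
          rw [List.getElem_take, List.getElem_drop, List.getD_eq_getElem _ _ (by omega)]
        rw [hgw j hj2]
        by_cases hjm : j < m
        · rw [List.getElem_append_left (by omega), hgu j hjm]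
        · have hjm' : j - m < m := by omega
          rw [List.getElem_append_right (by omega)]
          simp only [hulen]
          rw [hgu (j - m) hjm', hww (j - m) hjm']
          congr 1
          omega
    exact ⟨w.take q, w.drop (q + 2 * m), by
      rw [huu, ← List.take_add, List.take_append_drop]⟩
end

section
/- The infinite word γ^ω(0) = 0102010301020104⋯, obtained by iterating the morphism γ(i) = 0·(i+1) starting from the letter 0, is the lexicographically least infinite squarefree word over ℕ: it is squarefree, and every infinite squarefree word over ℕ is lexicographically greater than or equal to it. -/
/-- The infinite word γ^ω(0), as a function giving the letter at (0-indexed) position `n`.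
Since γ(0) = 0·1 begins with 0, each γ^m(0) is a prefix of γ^(m+1)(0), and γ^(n+1)(0)
has length 2^(n+1) > n, so its `n`-th letter is the `n`-th letter of γ^ω(0). -/
def gammaOmega : ℕ → ℕ := fun n => (gammaW^[n + 1] [0]).getD n 0

/-- `x` is a factor (contiguous subword) of the infinite word `f`. -/
def InfFactor (x : List ℕ) (f : ℕ → ℕ) : Prop :=
  ∃ i, x = (List.range x.length).map fun j => f (i + j)

/-- An infinite word over ℕ is squarefree if none of its factors is a square. -/
def SquarefreeInf (f : ℕ → ℕ) : Prop := ∀ x : List ℕ, x ≠ [] → ¬ InfFactor (x ++ x) f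

/-- Lexicographic order on infinite words over ℕ: `f ≤ g` iff `f = g` or they first
differ at a position where `f` has the smaller letter. -/
def LexLeInf (f g : ℕ → ℕ) : Prop :=
  f = g ∨ ∃ n, (∀ m < n, f m = g m) ∧ f n < g n

/-!
Position `n` of γ^ω(0) carries the 2-adic valuation of `n + 1` (the ruler sequence), because
γ sends the ruler word of length `N` to the ruler word of length `2N`.

A square of period `L` in the ruler sequence would give `v₂ m = v₂ (m + L)` on a window of `2L`
consecutive integers; but the largest valuation in a window is attained only once, since strictly
between two integers of equal valuation lies one of larger valuation.

If a squarefree word `g` agrees with the ruler sequence before `n` and `g n = c < v₂ (n + 1)`, then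
the `2^(c+1)` letters ending at position `n` form a square: the ruler sequence is `2^c`-periodic
below valuation `c`, and its letter `c` just before the midpoint matches `g n`.
-/

open List

section Valuation

variable {p : ℕ} [Fact p.Prime]

theorem padicValNat_add_of_pow_succ_dvd {a b : ℕ} (hb : b ≠ 0)
    (ha : p ^ (padicValNat p b + 1) ∣ a) : padicValNat p (a + b) = padicValNat p b := by
  have hab : a + b ≠ 0 := by omega
  apply le_antisymm
  · by_contra! h
    have hdvd : p ^ (padicValNat p b + 1) ∣ a + b := (padicValNat_dvd_iff_le hab).2 h
    exact pow_succ_padicValNat_not_dvd hb ((Nat.dvd_add_right ha).1 hdvd)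
  · exact (padicValNat_dvd_iff_le hab).1
      (dvd_add ((pow_dvd_pow p (Nat.le_succ _)).trans ha) pow_padicValNat_dvd)

theorem padicValNat_add_of_lt_pow {a b k : ℕ} (ha : p ^ k ∣ a) (hb : b ≠ 0) (hbk : b < p ^ k) :
    padicValNat p (a + b) = padicValNat p b := by
  have hlt : padicValNat p b < k :=
    (Nat.pow_lt_pow_iff_right (Fact.out : p.Prime).one_lt).1
      ((Nat.le_of_dvd (Nat.pos_of_ne_zero hb) pow_padicValNat_dvd).trans_lt hbk)
  exact padicValNat_add_of_pow_succ_dvd hb ((pow_dvd_pow p hlt).trans ha)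

end Valuation

theorem exists_padicValNat_two_lt_of_eq {a b : ℕ} (ha : a ≠ 0) (hab : a < b)
    (h : padicValNat 2 a = padicValNat 2 b) :
    ∃ c, a < c ∧ c < b ∧ padicValNat 2 a < padicValNat 2 c := by
  have hb : b ≠ 0 := by omega
  generalize hv : padicValNat 2 a = v at h ⊢
  obtain ⟨α, rfl⟩ : 2 ^ v ∣ a := hv ▸ pow_padicValNat_dvd
  obtain ⟨β, rfl⟩ : 2 ^ v ∣ b := h ▸ pow_padicValNat_dvd
  have hodd : ∀ γ, 2 ^ v * γ ≠ 0 → padicValNat 2 (2 ^ v * γ) = v → ¬ 2 ∣ γ := by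
    rintro γ hγ hval ⟨δ, rfl⟩
    have := (padicValNat_dvd_iff_le (p := 2) (n := v + 1) hγ).1 ⟨δ, by ring⟩
    omega
  have hα := hodd α ha hv
  have hβ := hodd β hb h.symm
  have hαβ : α < β := Nat.lt_of_mul_lt_mul_left hab
  have hc : 2 ^ v * (α + 1) ≠ 0 := by positivity
  refine ⟨2 ^ v * (α + 1), by gcongr; omega, by gcongr; omega, ?_⟩
  obtain ⟨δ, hδ⟩ : 2 ∣ α + 1 := by omega
  have := (padicValNat_dvd_iff_le (p := 2) (n := v + 1) hc).1 ⟨δ, by rw [hδ]; ring⟩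
  omega

def ruler (n : ℕ) : ℕ := padicValNat 2 (n + 1)

theorem ruler_two_mul (n : ℕ) : ruler (2 * n) = 0 :=
  padicValNat.eq_zero_of_not_dvd (by omega)

theorem ruler_two_mul_add_one (n : ℕ) : ruler (2 * n + 1) = ruler n + 1 := by
  rw [ruler, show 2 * n + 1 + 1 = 2 * (n + 1) by ring, padicValNat.mul two_ne_zero n.succ_ne_zero,
    padicValNat.self one_lt_two, add_comm, ruler]

theorem gammaW_append (u w : List ℕ) : gammaW (u ++ w) = gammaW u ++ gammaW w := by
  simp [gammaW]

theorem gammaW_map_ruler_range (N : ℕ) :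
    gammaW ((range N).map ruler) = (range (2 * N)).map ruler := by
  induction N with
  | zero => rfl
  | succ N ih =>
    rw [range_succ, map_append, gammaW_append, ih, Nat.mul_succ, range_succ, range_succ]
    simp [gammaW, ruler_two_mul, ruler_two_mul_add_one]

theorem gammaW_iterate_zero (k : ℕ) : gammaW^[k] [0] = (range (2 ^ k)).map ruler := by
  induction k with
  | zero => simp [ruler]
  | succ k ih => rw [Function.iterate_succ_apply', ih, gammaW_map_ruler_range, pow_succ, mul_comm]

theorem gammaOmega_eq_ruler : gammaOmega = ruler := by
  funext n
  have hn : n < ((range (2 ^ (n + 1))).map ruler).length := by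
    simpa using n.lt_two_pow_self.trans (Nat.pow_lt_pow_right one_lt_two n.lt_succ_self)
  rw [gammaOmega, gammaW_iterate_zero, getD_eq_getElem _ _ hn, getElem_map, getElem_range]

theorem map_range_add_add {α : Type*} (f : ℕ → α) (i L : ℕ) :
    (range (L + L)).map (fun j => f (i + j)) =
      (range L).map (fun j => f (i + j)) ++ (range L).map (fun j => f (i + L + j)) := by
  simp only [range_add, map_append, map_map, Function.comp_def, Nat.add_assoc]

theorem squarefreeInf_iff {f : ℕ → ℕ} :
    SquarefreeInf f ↔ ∀ i L, 0 < L → ∃ j < L, f (i + j) ≠ f (i + L + j) := by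
  constructor
  · intro hf i L hL
    by_contra! hsq
    refine hf ((range L).map fun j => f (i + j)) (by simp; omega) ⟨i, ?_⟩
    rw [length_append, length_map, length_range, map_range_add_add]
    exact congrArg (_ ++ ·) (map_inj_left.2 fun j hj => hsq j (mem_range.1 hj))
  · rintro hf x hx ⟨i, hi⟩
    obtain ⟨j, hj, hne⟩ := hf i x.length (length_pos_iff.2 hx)
    rw [length_append, map_range_add_add] at hi
    obtain ⟨hx₁, hx₂⟩ := append_inj hi (by simp)
    exact hne (map_inj_left.1 (hx₁.symm.trans hx₂) j (mem_range.2 hj))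

theorem ruler_squarefreeInf : SquarefreeInf ruler := by
  rw [squarefreeInf_iff]
  intro i L hL
  by_contra! hsq
  have hshift : ∀ a, i < a → a ≤ i + L → padicValNat 2 a = padicValNat 2 (a + L) := by
    intro a h₁ h₂
    have := hsq (a - i - 1) (by omega)
    rwa [ruler, ruler, show i + (a - i - 1) + 1 = a by omega,
      show i + L + (a - i - 1) + 1 = a + L by omega] at this
  obtain ⟨m, hm, hmax⟩ := (Finset.Ioc i (i + 2 * L)).exists_max_image (padicValNat 2)
    ⟨i + 1, Finset.mem_Ioc.2 ⟨by omega, by omega⟩⟩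
  rw [Finset.mem_Ioc] at hm
  obtain ⟨a, ha₁, ha₂, hma⟩ : ∃ a, i < a ∧ a ≤ i + L ∧ (m = a ∨ m = a + L) := by
    rcases le_or_gt m (i + L) with h | h
    · exact ⟨m, hm.1, h, Or.inl rfl⟩
    · exact ⟨m - L, by omega, by omega, Or.inr (by omega)⟩
  have hval := hshift a ha₁ ha₂
  obtain ⟨c, hac, hcb, hc⟩ := exists_padicValNat_two_lt_of_eq (by omega) (by omega) hval
  have := hmax c (Finset.mem_Ioc.2 ⟨by omega, by omega⟩)
  rcases hma with rfl | rfl <;> omega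

theorem ruler_le_of_squarefreeInf {g : ℕ → ℕ} (hg : SquarefreeInf g) {n : ℕ}
    (hpre : ∀ m < n, g m = ruler m) : ruler n ≤ g n := by
  by_contra! hlt
  set c := g n
  set t := 2 ^ c
  have htwo : 2 ^ (c + 1) = 2 * t := by rw [pow_succ, mul_comm]
  have hn : 2 ^ (c + 1) ∣ n + 1 := (padicValNat_dvd_iff_le n.succ_ne_zero).2 hlt
  have ht : 2 * t ≤ n + 1 := htwo ▸ Nat.le_of_dvd n.succ_pos hn
  set i := n + 1 - 2 * t
  have hi : 2 ^ (c + 1) ∣ i := Nat.dvd_sub hn (htwo ▸ dvd_rfl)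
  have hti : t ∣ i := (pow_dvd_pow 2 c.le_succ).trans hi
  have hit : t ∣ i + t := dvd_add hti dvd_rfl
  obtain ⟨j, hj, hne⟩ := squarefreeInf_iff.1 hg i t (by positivity)
  apply hne
  rcases (show j + 1 ≤ t from hj).lt_or_eq with hj' | hj'
  · rw [hpre _ (by omega), hpre _ (by omega), ruler, ruler, add_assoc i, add_assoc (i + t),
      padicValNat_add_of_lt_pow hti j.succ_ne_zero hj',
      padicValNat_add_of_lt_pow hit j.succ_ne_zero hj']
  · have hmid : i + t + j = n := by omega
    rw [hmid, hpre _ (by omega), ruler, add_assoc, hj',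
      padicValNat_add_of_pow_succ_dvd (by positivity) (by rwa [padicValNat.prime_pow]),
      padicValNat.prime_pow]

theorem lexLeInf_of_forall_le {f g : ℕ → ℕ} (h : ∀ n, (∀ m < n, f m = g m) → f n ≤ g n) :
    LexLeInf f g := by
  classical
  by_cases hfg : f = g
  · exact Or.inl hfg
  have hex : ∃ n, f n ≠ g n := Function.ne_iff.1 hfg
  have hmin : ∀ m < Nat.find hex, f m = g m := fun m hm => not_not.1 (Nat.find_min hex hm)
  exact Or.inr ⟨Nat.find hex, hmin, (h _ hmin).lt_of_ne (Nat.find_spec hex)⟩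

/-- γ^ω(0) is the lexicographically least infinite squarefree word over ℕ. -/
theorem gammaOmega_lex_least_squarefree :
    SquarefreeInf gammaOmega ∧ ∀ g : ℕ → ℕ, SquarefreeInf g → LexLeInf gammaOmega g := by
  rw [gammaOmega_eq_ruler]
  refine ⟨ruler_squarefreeInf, fun g hg => lexLeInf_of_forall_le fun n hn => ?_⟩
  exact ruler_le_of_squarefreeInf hg fun m hm => (hn m hm).symm
end

section
/- Let P be a set of finite words over ℕ, let v be a (finite or infinite) word over ℕ that is irreducible with respect to P, and let w be a (finite or infinite) word over ℕ that is P-free. Then either w is a prefix of v, or v ≤ w in lexicographic order. Consequently, an infinite word that is both P-free and irreducible with respect to P is the lexicographically least infinite P-free word over ℕ. -/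
/-- A (finite or infinite) word over ℕ: either a finite list, or an infinite
sequence of letters (a function from positions to ℕ). -/
def Word : Type := List ℕ ⊕ (ℕ → ℕ)

/-- The letter of a word at (0-indexed) position `n`, if any. -/
def wget : Word → ℕ → Option ℕ
  | .inl l, n => l[n]?
  | .inr f, n => some (f n)

/-- The word obtained by replacing the letter at position `n` by `c`. -/
def wset : Word → ℕ → ℕ → Word
  | .inl l, n, c => .inl (l.set n c)
  | .inr f, n, c => .inr (Function.update f n c)

/-- The finite word `x` occurs in `v` as a factor ending at (0-indexed) position `n`. -/
def FactorEndAt (x : List ℕ) (v : Word) (n : ℕ) : Prop :=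
  x.length ≤ n + 1 ∧ ∀ j < x.length, x[j]? = wget v (n + 1 - x.length + j)

/-- `v` avoids the pattern `P` (is `P`-free): no factor of `v` belongs to `P`. -/
def PFreeW (P : Set (List ℕ)) (v : Word) : Prop :=
  ∀ x ∈ P, ∀ n, ¬ FactorEndAt x v n

/-- `v` is irreducible at position `n` with respect to `P`: replacing the letter at
position `n` by any strictly smaller letter yields a word with a factor in `P`
ending at position `n`. -/
def IrredAt (P : Set (List ℕ)) (v : Word) (n : ℕ) : Prop :=
  ∀ d, wget v n = some d → ∀ c < d, ∃ x ∈ P, FactorEndAt x (wset v n c) n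

/-- `v` is irreducible with respect to `P` if it is irreducible at every position. -/
def Irred (P : Set (List ℕ)) (v : Word) : Prop := ∀ n, IrredAt P v n

/-- `w` is a prefix of `v`. -/
def IsPrefixW (w v : Word) : Prop := ∀ n c, wget w n = some c → wget v n = some c

/-- Lexicographic order: `v ≤ w` iff `v` is a prefix of `w`, or `v` and `w` share a
common prefix immediately after which `v` has a strictly smaller letter than `w`. -/
def LexLeW (v w : Word) : Prop :=
  IsPrefixW v w ∨ ∃ n c d, c < d ∧ wget v n = some c ∧ wget w n = some d ∧
    ∀ m < n, wget v m = wget w m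

/-
Compare `v` and `w` at the first position `n` where they differ. If one of them has ended
there, it is a prefix of the other. Otherwise, if `w` had the smaller letter `c`, then `w`
agrees up to `n` with the word obtained from `v` by lowering its `n`-th letter to `c`; by
irreducibility of `v` that word has a factor in `P` ending at `n`, and `w` then contains the
same factor, contradicting `P`-freeness.
-/

lemma wget_eq_none_of_le {v : Word} {n m : ℕ} (h : wget v n = none) (hnm : n ≤ m) :
    wget v m = none := by
  cases v with
  | inl l =>
    simp only [wget, List.getElem?_eq_none_iff] at h ⊢
    omega
  | inr f => simp [wget] at h

lemma wget_wset_self {v : Word} {n d : ℕ} (h : wget v n = some d) (c : ℕ) :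
    wget (wset v n c) n = some c := by
  cases v with
  | inl l =>
    simp only [wget, wset] at h ⊢
    have hn : n < l.length := (List.getElem?_eq_some_iff.mp h).1
    simp [hn]
  | inr f => simp [wget, wset]

lemma wget_wset_of_ne {v : Word} {n m c : ℕ} (h : m ≠ n) :
    wget (wset v n c) m = wget v m := by
  cases v with
  | inl l => simp [wget, wset, Ne.symm h]
  | inr f => simp [wget, wset, Function.update_of_ne h]

lemma FactorEndAt.of_wget_eq {x : List ℕ} {u w : Word} {n : ℕ} (h : FactorEndAt x u n)
    (hag : ∀ m ≤ n, wget u m = wget w m) : FactorEndAt x w n := by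
  obtain ⟨hlen, hx⟩ := h
  exact ⟨hlen, fun j hj => by rw [hx j hj, hag _ (by omega)]⟩

lemma isPrefixW_of_wget_eq_none {v w : Word} {n : ℕ} (hag : ∀ m < n, wget v m = wget w m)
    (hv : wget v n = none) : IsPrefixW v w := by
  intro m c hm
  rcases lt_or_ge m n with h | h
  · rwa [← hag m h]
  · rw [wget_eq_none_of_le hv h] at hm
    exact absurd hm nofun

lemma isPrefixW_inr_iff {f g : ℕ → ℕ} : IsPrefixW (.inr f) (.inr g) ↔ f = g := by
  refine ⟨fun h => funext fun n => ?_, fun h => h ▸ fun _ _ => id⟩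
  simpa [wget, eq_comm] using h n (f n) rfl

lemma Irred.le_of_pFreeW {P : Set (List ℕ)} {v w : Word} (hv : Irred P v) (hw : PFreeW P w)
    {n d c : ℕ} (hag : ∀ m < n, wget v m = wget w m) (hvn : wget v n = some d)
    (hwn : wget w n = some c) : d ≤ c := by
  by_contra! hcd
  obtain ⟨x, hxP, hx⟩ := hv n d hvn c hcd
  refine hw x hxP n (hx.of_wget_eq fun m hm => ?_)
  rcases eq_or_ne m n with rfl | hmn
  · rw [wget_wset_self hvn c, hwn]
  · rw [wget_wset_of_ne hmn, hag m (by omega)]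

lemma Irred.isPrefixW_or_lexLeW {P : Set (List ℕ)} {v w : Word} (hv : Irred P v)
    (hw : PFreeW P w) : IsPrefixW w v ∨ LexLeW v w := by
  by_cases hsame : ∀ n, wget v n = wget w n
  · exact .inl fun n c hc => (hsame n).trans hc
  classical
  push Not at hsame
  let n := Nat.find hsame
  have hne : wget v n ≠ wget w n := Nat.find_spec hsame
  have hag : ∀ m < n, wget v m = wget w m := fun m hm => not_not.mp (Nat.find_min hsame hm)
  rcases hvn : wget v n with _ | d <;> rcases hwn : wget w n with _ | c
  · exact absurd (hvn.trans hwn.symm) hne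
  · exact .inr (.inl (isPrefixW_of_wget_eq_none hag hvn))
  · exact .inl (isPrefixW_of_wget_eq_none (fun m hm => (hag m hm).symm) hwn)
  · have hdc : d < c :=
      (hv.le_of_pFreeW hw hag hvn hwn).lt_of_ne fun h => hne (by rw [hvn, hwn, h])
    exact .inr (.inr ⟨n, d, c, hdc, hvn, hwn, hag⟩)

/-- If `v` is irreducible with respect to `P` and `w` is `P`-free, then either `w` is a
prefix of `v`, or `v ≤ w` lexicographically. Consequently, an infinite word that is both
`P`-free and irreducible is the lexicographically least infinite `P`-free word over ℕ. -/
theorem irreducible_lex_least :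
    (∀ (P : Set (List ℕ)) (v w : Word), Irred P v → PFreeW P w →
      IsPrefixW w v ∨ LexLeW v w) ∧
    (∀ (P : Set (List ℕ)) (f : ℕ → ℕ), PFreeW P (.inr f) → Irred P (.inr f) →
      ∀ g : ℕ → ℕ, PFreeW P (.inr g) → LexLeW (.inr f) (.inr g)) := by
  refine ⟨fun P v w hv hw => hv.isPrefixW_or_lexLeW hw, fun P f _ hf g hg => ?_⟩
  rcases hf.isPrefixW_or_lexLeW hg with h | h
  · exact .inl (isPrefixW_inr_iff.mpr (isPrefixW_inr_iff.mp h).symm)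
  · exact h
end

section
/- For every h ∈ ℕ: the word φ(h) starts with the letter h and ends with the letter h+1. Moreover, for every finite word w over {0,…,h}, the number of occurrences of the letter h+1 in φ(w) equals the number of occurrences of the letter h in w, and every occurrence of h+1 in φ(w) is immediately preceded by the letter 0. -/
/-- S⁻¹: move the last letter of a nonempty word to the front. -/
def sInv (w : List ℕ) : List ℕ := w.rotate (w.length - 1)

/-- Apply a substitution `f` letterwise to a word (the morphism determined by `f`). -/
def applyM (f : ℕ → List ℕ) (w : List ℕ) : List ℕ := (w.map f).flatten

/-- Fuel-indexed approximation of the morphism φ: `phiAux n` agrees with φ on all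
letters `c < n`.  (Computing φ^c(00) only uses φ on letters smaller than `c`, so the
recursion is well-founded in the fuel.) -/
def phiAux : ℕ → ℕ → List ℕ
  | 0, _ => []
  | n + 1, c => sInv ((applyM (phiAux n))^[c] [0, 0]) ++ [c + 1]

/-- The morphism φ on letters: φ(h) = S⁻¹(φ^h(00))·(h+1).
In particular φ(0) = 001 and φ(1) = 1001002. -/
def phi (c : ℕ) : List ℕ := phiAux (c + 1) c

/-- The morphism φ on words. -/
def phiW (w : List ℕ) : List ℕ := applyM phi w

/-! The word φ^c(00) has all letters at most c and ends in 0c, so S⁻¹ turns it into c·u·0 and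
φ(c) = c·u·0·(c+1) with every letter of u at most c. Hence on a word over {0,…,h} the letter
h+1 can only come from the final letter of some φ(h), which sits right after a 0. -/

lemma sInv_append_singleton (l : List ℕ) (a : ℕ) : sInv (l ++ [a]) = a :: l := by
  rw [sInv, List.length_append, List.length_singleton, Nat.add_sub_cancel,
    List.rotate_eq_drop_append_take (by simp), List.drop_left, List.take_left]
  rfl

section applyM

variable {f g : ℕ → List ℕ}

lemma applyM_append (u v : List ℕ) : applyM f (u ++ v) = applyM f u ++ applyM f v := by
  simp [applyM]

lemma mem_applyM {w : List ℕ} {x : ℕ} : x ∈ applyM f w ↔ ∃ c ∈ w, x ∈ f c := by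
  simp [applyM]

lemma applyM_congr {w : List ℕ} (h : ∀ x ∈ w, f x = g x) : applyM f w = applyM g w := by
  rw [applyM, applyM, List.map_congr_left h]

lemma le_of_mem_iterate_applyM (hf : ∀ y, ∀ x ∈ f y, x ≤ y + 1) {w : List ℕ} {m : ℕ}
    (hw : ∀ x ∈ w, x ≤ m) (k : ℕ) : ∀ x ∈ (applyM f)^[k] w, x ≤ m + k := by
  induction k with
  | zero => simpa using hw
  | succ k ih =>
    intro x hx
    rw [Function.iterate_succ_apply', mem_applyM] at hx
    obtain ⟨y, hy, hxy⟩ := hx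
    have := hf y x hxy
    have := ih y hy
    omega

lemma iterate_applyM_congr (hf : ∀ y, ∀ x ∈ f y, x ≤ y + 1) {w : List ℕ} {m c : ℕ}
    (hw : ∀ x ∈ w, x ≤ m) (hfg : ∀ x < c, f x = g x) {k : ℕ} (hk : m + k ≤ c) :
    (applyM f)^[k] w = (applyM g)^[k] w := by
  induction k with
  | zero => rfl
  | succ k ih =>
    rw [Function.iterate_succ_apply', Function.iterate_succ_apply', ← ih (by omega)]
    refine applyM_congr fun x hx => hfg x ?_
    have := le_of_mem_iterate_applyM hf hw k x hx
    omega

end applyM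

lemma le_of_mem_phiAux {n c x : ℕ} (hx : x ∈ phiAux n c) : x ≤ c + 1 := by
  induction n generalizing c x with
  | zero => simp [phiAux] at hx
  | succ n ih =>
    rw [phiAux, List.mem_append, sInv, List.mem_rotate, List.mem_singleton] at hx
    rcases hx with hx | rfl
    · have := le_of_mem_iterate_applyM (fun _ _ => ih) (m := 0) (by simp) c x hx
      omega
    · rfl

lemma le_of_mem_phi {c x : ℕ} (hx : x ∈ phi c) : x ≤ c + 1 :=
  le_of_mem_phiAux hx

lemma phiAux_eq_phi {c n : ℕ} (hcn : c < n) : phiAux n c = phi c := by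
  induction c using Nat.strong_induction_on generalizing n with
  | _ c ih =>
    obtain ⟨m, rfl⟩ : ∃ m, n = m + 1 := ⟨n - 1, by omega⟩
    have hagree : ∀ x < c, phiAux m x = phiAux c x := fun x hx =>
      (ih x hx (by omega)).trans (ih x hx hx).symm
    rw [phi, phiAux, phiAux, iterate_applyM_congr (fun _ _ => le_of_mem_phiAux)
      (m := 0) (by simp) hagree (by omega)]

lemma phi_eq (c : ℕ) : phi c = sInv (phiW^[c] [0, 0]) ++ [c + 1] := by
  rw [phi, phiAux, iterate_applyM_congr (fun _ _ => le_of_mem_phiAux) (m := 0) (by simp)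
    (fun x hx => phiAux_eq_phi hx) (by omega)]
  rfl

lemma phiW_append (u v : List ℕ) : phiW (u ++ v) = phiW u ++ phiW v :=
  applyM_append u v

lemma phiW_singleton (c : ℕ) : phiW [c] = phi c := by
  simp [phiW, applyM]

lemma phi_eq_of_iterate_phiW_eq {c : ℕ} {l : List ℕ} (hl : phiW^[c] [0, 0] = l ++ [0, c]) :
    phi c = c :: (l ++ [0, c + 1]) := by
  rw [phi_eq, hl, show l ++ [0, c] = (l ++ [0]) ++ [c] by simp, sInv_append_singleton]
  simp

lemma exists_iterate_phiW_eq (k : ℕ) : ∃ l, phiW^[k] [0, 0] = l ++ [0, k] := by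
  induction k with
  | zero => exact ⟨[], rfl⟩
  | succ k ih =>
    obtain ⟨l, hl⟩ := ih
    refine ⟨phiW (l ++ [0]) ++ k :: l, ?_⟩
    rw [Function.iterate_succ_apply', hl, show l ++ [0, k] = (l ++ [0]) ++ [k] by simp,
      phiW_append, phiW_singleton, phi_eq_of_iterate_phiW_eq hl]
    simp

lemma exists_phi_eq_cons (c : ℕ) :
    ∃ l, phi c = c :: (l ++ [0, c + 1]) ∧ ∀ x ∈ l, x ≤ c := by
  obtain ⟨l, hl⟩ := exists_iterate_phiW_eq c
  refine ⟨l, phi_eq_of_iterate_phiW_eq hl, fun x hx => ?_⟩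
  have hx' : x ∈ phiW^[c] [0, 0] := by simp [hl, hx]
  simpa using le_of_mem_iterate_applyM (fun _ _ => le_of_mem_phi) (m := 0) (by simp) c x hx'

lemma count_phi_self (h : ℕ) : (phi h).count (h + 1) = 1 := by
  obtain ⟨l, hl, hle⟩ := exists_phi_eq_cons h
  have hl0 : l.count (h + 1) = 0 := List.count_eq_zero.2 fun hm => by
    have := hle _ hm
    omega
  simp [hl, List.count_append, hl0]

lemma count_phi_of_lt {c h : ℕ} (hc : c < h) : (phi c).count (h + 1) = 0 :=
  List.count_eq_zero.2 fun hm => by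
    have := le_of_mem_phi hm
    omega

lemma count_phiW {h : ℕ} {w : List ℕ} (hw : ∀ c ∈ w, c ≤ h) :
    (phiW w).count (h + 1) = w.count h := by
  induction w with
  | nil => rfl
  | cons c w ih =>
    rw [show c :: w = [c] ++ w from rfl, phiW_append, phiW_singleton, List.count_append,
      List.count_append, ih fun x hx => hw x (by simp [hx])]
    rcases (hw c (by simp)).lt_or_eq with hc | rfl
    · simp [count_phi_of_lt hc, hc.ne]
    · simp [count_phi_self]

def PrecededByZero (a : ℕ) (L : List ℕ) : Prop :=
  ∀ n, L[n]? = some a → 0 < n ∧ L[n - 1]? = some 0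

namespace PrecededByZero

variable {a : ℕ} {u v : List ℕ}

lemma of_not_mem (h : a ∉ u) : PrecededByZero a u :=
  fun _ hn => absurd (List.mem_of_getElem? hn) h

lemma zero_pair (ha : a ≠ 0) : PrecededByZero a [0, a] := by
  rintro (_ | _ | n) hn
  · exact absurd (Option.some_injective _ hn) ha.symm
  · simp
  · simp at hn

lemma append (hu : PrecededByZero a u) (hv : PrecededByZero a v) :
    PrecededByZero a (u ++ v) := by
  intro n hn
  rcases lt_or_ge n u.length with hnu | hnu
  · rw [List.getElem?_append_left hnu] at hn
    obtain ⟨hpos, hprev⟩ := hu n hn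
    exact ⟨hpos, by rwa [List.getElem?_append_left (by omega)]⟩
  · rw [List.getElem?_append_right hnu] at hn
    obtain ⟨hpos, hprev⟩ := hv _ hn
    refine ⟨by omega, ?_⟩
    rwa [List.getElem?_append_right (by omega), show n - 1 - u.length = n - u.length - 1 by omega]

end PrecededByZero

lemma precededByZero_phi {c h : ℕ} (hc : c ≤ h) : PrecededByZero (h + 1) (phi c) := by
  rcases hc.lt_or_eq with hc | rfl
  · exact .of_not_mem fun hm => by
      have := le_of_mem_phi hm
      omega
  · obtain ⟨l, hl, hle⟩ := exists_phi_eq_cons c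
    rw [hl, ← List.cons_append]
    refine .append (.of_not_mem fun hm => ?_) (.zero_pair c.succ_ne_zero)
    rcases List.mem_cons.1 hm with h | h
    · omega
    · have := hle _ h
      omega

lemma precededByZero_phiW {h : ℕ} {w : List ℕ} (hw : ∀ c ∈ w, c ≤ h) :
    PrecededByZero (h + 1) (phiW w) := by
  induction w with
  | nil => exact .of_not_mem List.not_mem_nil
  | cons c w ih =>
    rw [show c :: w = [c] ++ w from rfl, phiW_append, phiW_singleton]
    exact (precededByZero_phi (hw c (by simp))).append (ih fun x hx => hw x (by simp [hx]))

/-- For every h: φ(h) starts with h and ends with h+1; moreover for every word w over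
{0,…,h}, the number of occurrences of h+1 in φ(w) equals the number of occurrences of
h in w, and every occurrence of h+1 in φ(w) is immediately preceded by a 0. -/
theorem phi_form (h : ℕ) :
    (phi h).head? = some h ∧ (phi h).getLast? = some (h + 1) ∧
    ∀ w : List ℕ, (∀ c ∈ w, c ≤ h) →
      (phiW w).count (h + 1) = w.count h ∧
      ∀ n, (phiW w)[n]? = some (h + 1) → 0 < n ∧ (phiW w)[n - 1]? = some 0 := by
  obtain ⟨l, hl, -⟩ := exists_phi_eq_cons h
  refine ⟨by rw [hl]; rfl, by simp [hl, List.getLast?_cons], fun w hw => ?_⟩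
  exact ⟨count_phiW hw, precededByZero_phiW hw⟩
end

section
/- For every k ∈ ℕ, S⁻¹(ψ(0,k)) = R(ψ(0,k)): moving the last letter of ψ(0,k) to the front yields the reversal of ψ(0,k). -/
/-- ψ(h,k) = φ^(k−h)(h); in particular ψ(0,k) = φ^k(0). -/
def psi (h k : ℕ) : List ℕ := phiW^[k - h] [h]

namespace SPAux

lemma applyM_append (f : ℕ → List ℕ) (a b : List ℕ) :
    applyM f (a ++ b) = applyM f a ++ applyM f b := by
  simp [applyM]

lemma applyM_singleton (f : ℕ → List ℕ) (x : ℕ) : applyM f [x] = f x := by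
  simp [applyM]

lemma mem_applyM {f : ℕ → List ℕ} {w : List ℕ} {x : ℕ} :
    x ∈ applyM f w ↔ ∃ d ∈ w, x ∈ f d := by
  simp [applyM]

lemma applyM_congr {f g : ℕ → List ℕ} {w : List ℕ} (h : ∀ x ∈ w, f x = g x) :
    applyM f w = applyM g w := by
  unfold applyM
  rw [List.map_congr_left h]

lemma phiW_append (a b : List ℕ) : phiW (a ++ b) = phiW a ++ phiW b :=
  applyM_append _ a b

lemma phiW_singleton (x : ℕ) : phiW [x] = phi x := applyM_singleton _ x

lemma phiW_iter_append (j : ℕ) (a b : List ℕ) :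
    phiW^[j] (a ++ b) = phiW^[j] a ++ phiW^[j] b := by
  induction j generalizing a b with
  | zero => rfl
  | succ n ih =>
      rw [Function.iterate_succ_apply, Function.iterate_succ_apply,
        Function.iterate_succ_apply, phiW_append, ih]

lemma sInv_concat (w : List ℕ) (a : ℕ) : sInv (w ++ [a]) = a :: w := by
  unfold sInv
  have h1 : (w ++ [a]).length - 1 = w.length := by simp
  rw [h1, List.rotate_eq_drop_append_take (by simp)]
  simp

lemma phi_spec : ∀ c : ℕ,
    (∀ n, c < n → phiAux n c = sInv (phiW^[c] [0, 0]) ++ [c + 1]) ∧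
    (∀ x ∈ phi c, x ≤ c + 1) := by
  intro c
  induction c using Nat.strong_induction_on with
  | _ c IH =>
    have hsub : ∀ j, j ≤ c → ∀ x ∈ phiW^[j] [0, 0], x ≤ j := by
      intro j
      induction j with
      | zero =>
          intro _ x hx
          simp at hx
          omega
      | succ n ihn =>
          intro hle x hx
          rw [Function.iterate_succ_apply'] at hx
          unfold phiW at hx
          rcases mem_applyM.1 hx with ⟨d, hd, hxd⟩
          have hdn : d ≤ n := ihn (by omega) d hd
          have := (IH d (by omega)).2 x hxd
          omega
    have h2 : ∀ n, c ≤ n → ∀ j, j ≤ c →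
        (applyM (phiAux n))^[j] [0, 0] = phiW^[j] [0, 0] := by
      intro n hn j
      induction j with
      | zero => intro _; rfl
      | succ m ihm =>
          intro hle
          rw [Function.iterate_succ_apply', Function.iterate_succ_apply',
            ihm (by omega)]
          have hcg : applyM (phiAux n) (phiW^[m] [0, 0])
              = applyM phi (phiW^[m] [0, 0]) := by
            apply applyM_congr
            intro x hx
            have hxm : x ≤ m := hsub m (by omega) x hx
            have hxc : x < c := by omega
            have e1 := (IH x hxc).1 n (by omega)
            have e2 := (IH x hxc).1 (x + 1) (Nat.lt_succ_self x)
            rw [e1, show phi x = phiAux (x + 1) x from rfl, e2]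
          rw [hcg]
          rfl
    have hmain : ∀ n, c < n → phiAux n c = sInv (phiW^[c] [0, 0]) ++ [c + 1] := by
      intro n hn
      match n, hn with
      | m + 1, hn =>
        show sInv ((applyM (phiAux m))^[c] [0, 0]) ++ [c + 1] = _
        rw [h2 m (by omega) c le_rfl]
    refine ⟨hmain, ?_⟩
    intro x hx
    rw [show phi c = phiAux (c + 1) c from rfl,
      hmain (c + 1) (Nat.lt_succ_self c)] at hx
    rcases List.mem_append.1 hx with hx | hx
    · unfold sInv at hx
      have := List.mem_rotate.1 hx
      have := hsub c le_rfl x this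
      omega
    · simp at hx
      omega

lemma phi_eq (c : ℕ) : phi c = sInv (phiW^[c] [0, 0]) ++ [c + 1] :=
  (phi_spec c).1 (c + 1) (Nat.lt_succ_self c)

lemma psi_succ {h k : ℕ} (hk : h ≤ k) : psi h (k + 1) = phiW (psi h k) := by
  unfold psi
  rw [Nat.succ_sub hk, Function.iterate_succ_apply']

lemma psi_self (h : ℕ) : psi h h = [h] := by
  unfold psi
  rw [Nat.sub_self]
  rfl

/-- ψ(0,k) without its final letter. -/
def U (k : ℕ) : List ℕ := (psi 0 k).dropLast

lemma psi_zero_zero : psi 0 0 = [0] := psi_self 0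

lemma iter_two (c : ℕ) : phiW^[c] [0, 0] = psi 0 c ++ psi 0 c := by
  rw [show ([0, 0] : List ℕ) = [0] ++ [0] from rfl, phiW_iter_append]
  unfold psi
  rw [Nat.sub_zero]

lemma W_eq : ∀ k, psi 0 k = U k ++ [k] := by
  intro k
  induction k with
  | zero => rfl
  | succ n ih =>
      have h1 : psi 0 (n + 1)
          = (phiW (U n) ++ sInv (phiW^[n] [0, 0])) ++ [n + 1] := by
        rw [psi_succ (Nat.zero_le n)]
        conv_lhs => rw [ih]
        rw [phiW_append, phiW_singleton, phi_eq]
        simp [List.append_assoc]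
      have h2 : U (n + 1) = phiW (U n) ++ sInv (phiW^[n] [0, 0]) := by
        unfold U
        rw [h1, List.dropLast_concat]
        rfl
      rw [h1, h2]

lemma phi_struct (c : ℕ) :
    phi c = [c] ++ U c ++ [c] ++ U c ++ [c + 1] := by
  rw [phi_eq, iter_two]
  conv_lhs => rw [W_eq c]
  have h : (U c ++ [c]) ++ (U c ++ [c]) = (U c ++ [c] ++ U c) ++ [c] := by
    simp [List.append_assoc]
  rw [h, sInv_concat]
  simp [List.append_assoc]

/-- Decomposition recursion. -/
def R2S (h k : ℕ) : Prop :=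
  psi h (k + 1) = psi h k ++ U k ++ (psi (k - h) k).reverse ++ psi (h + 1) (k + 1)

/-- The palindromic property in "rotation" form. -/
def GoodS (k : ℕ) : Prop := (psi 0 k).reverse = [k] ++ U k

/-- The morphism-image lemma. -/
def CS (j m : ℕ) : Prop :=
  phiW (U m ++ (psi j m).reverse) = U (m + 1) ++ (psi (j + 1) (m + 1)).reverse

def Q (k : ℕ) : Prop := GoodS k ∧ ∀ h, h ≤ k → R2S h k

lemma Upal {k : ℕ} (h : GoodS k) : (U k).reverse = U k := by
  unfold GoodS at h
  rw [W_eq k] at h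
  simp at h
  exact h

lemma R1S {h k : ℕ} (hr : R2S h k) (hg : GoodS k) :
    (psi h (k + 1)).reverse
      = (psi (h + 1) (k + 1)).reverse ++ psi (k - h) k ++ U k
        ++ (psi h k).reverse := by
  rw [hr]
  simp [List.reverse_append, Upal hg, List.append_assoc]

lemma CS_base (m : ℕ) : CS m m := by
  unfold CS
  rw [psi_self m, psi_self (m + 1)]
  have h1 : U m ++ ([m] : List ℕ).reverse = psi 0 m := by
    rw [List.reverse_singleton, ← W_eq]
  rw [h1, ← psi_succ (Nat.zero_le m)]
  rw [W_eq (m + 1), List.reverse_singleton]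

lemma CS_step {j m : ℕ} (hj : j ≤ m) (hQm1 : Q (m + 1)) (hQm : Q m)
    (h1 : CS (j + 1) (m + 1)) (h2 : CS j m) : CS j (m + 1) := by
  unfold CS at h1 h2 ⊢
  have e2 := R1S (hQm.2 j hj) hQm.1
  rw [e2]
  have e3 := R1S (hQm1.2 (j + 1) (by omega)) hQm1.1
  have hsub : m + 1 - (j + 1) = m - j := by omega
  rw [hsub] at e3
  rw [e3]
  have hps : psi (m - j) (m + 1) = phiW (psi (m - j) m) :=
    psi_succ (Nat.sub_le m j)
  calc phiW (U (m + 1) ++ ((psi (j + 1) (m + 1)).reverse ++ psi (m - j) m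
          ++ U m ++ (psi j m).reverse))
      = phiW (U (m + 1) ++ (psi (j + 1) (m + 1)).reverse)
          ++ phiW (psi (m - j) m) ++ phiW (U m ++ (psi j m).reverse) := by
        rw [← phiW_append, ← phiW_append]
        congr 1
        simp [List.append_assoc]
    _ = (U (m + 2) ++ (psi (j + 2) (m + 2)).reverse) ++ psi (m - j) (m + 1)
          ++ (U (m + 1) ++ (psi (j + 1) (m + 1)).reverse) := by
        rw [h1, h2, hps]
    _ = U (m + 2) ++ ((psi (j + 2) (m + 2)).reverse ++ psi (m - j) (m + 1)
          ++ U (m + 1) ++ (psi (j + 1) (m + 1)).reverse) := by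
        simp [List.append_assoc]

lemma CS_main : ∀ m, (∀ i, i ≤ m → Q i) → ∀ j, j ≤ m → CS j m := by
  intro m
  induction m with
  | zero =>
      intro _ j hj
      interval_cases j
      exact CS_base 0
  | succ m' ihm =>
      intro hQ
      have hdown : ∀ d j, j + d = m' + 1 → CS j (m' + 1) := by
        intro d
        induction d with
        | zero =>
            intro j hj
            have : j = m' + 1 := by omega
            subst this
            exact CS_base (m' + 1)
        | succ e ihe =>
            intro j hj
            have hjm : j ≤ m' := by omega
            exact CS_step hjm (hQ (m' + 1) le_rfl) (hQ m' (by omega))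
              (ihe (j + 1) (by omega))
              (ihm (fun i hi => hQ i (by omega)) j hjm)
      intro j hj
      exact hdown (m' + 1 - j) j (by omega)

lemma Q_main : ∀ k, Q k := by
  intro k
  induction k using Nat.strong_induction_on with
  | _ k IH =>
    match k with
    | 0 =>
        constructor
        · unfold GoodS
          rw [psi_zero_zero]
          rfl
        · intro h hh
          interval_cases h
          unfold R2S
          decide
    | k' + 1 =>
        have hQk' : Q k' := IH k' (Nat.lt_succ_self k')
        have hCS : ∀ j, j ≤ k' → CS j k' :=
          CS_main k' (fun i hi => IH i (by omega))
        -- the telescoping chain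
        have hFstep : ∀ h, h ≤ k' →
            (psi h (k' + 1)).reverse ++ psi (k' + 1 - h) (k' + 1)
              = (psi (h + 1) (k' + 1)).reverse
                ++ psi (k' + 1 - (h + 1)) (k' + 1) := by
          intro h hh
          have hR1 := R1S (hQk'.2 h hh) hQk'.1
          have hR2 := hQk'.2 (k' - h) (Nat.sub_le k' h)
          unfold R2S at hR2
          have i1 : k' - (k' - h) = h := Nat.sub_sub_self hh
          have i2 : k' + 1 - h = (k' - h) + 1 := by omega
          have i3 : k' + 1 - (h + 1) = k' - h := by omega
          rw [i1] at hR2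
          rw [i2, i3, hR1, hR2]
          simp [List.append_assoc]
        have hchain : ∀ h, h ≤ k' + 1 →
            (psi 0 (k' + 1)).reverse ++ psi (k' + 1) (k' + 1)
              = (psi h (k' + 1)).reverse ++ psi (k' + 1 - h) (k' + 1) := by
          intro h
          induction h with
          | zero => intro _; rw [Nat.sub_zero]
          | succ n ihn =>
              intro hnk
              rw [ihn (by omega)]
              exact hFstep n (by omega)
        have hGood : GoodS (k' + 1) := by
          have hk := hchain (k' + 1) le_rfl
          rw [Nat.sub_self, psi_self] at hk
          unfold GoodS
          have hk2 : (psi 0 (k' + 1)).reverse ++ [k' + 1]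
              = ([k' + 1] ++ U (k' + 1)) ++ [k' + 1] := by
            rw [hk]
            conv_lhs => rw [W_eq (k' + 1)]
            simp [List.append_assoc]
          have := congrArg List.dropLast hk2
          rwa [List.dropLast_concat, List.dropLast_concat] at this
        refine ⟨hGood, ?_⟩
        intro h hh
        rcases Nat.lt_or_ge h (k' + 1) with hlt | hge
        · -- h ≤ k'
          have hhk : h ≤ k' := by omega
          unfold R2S
          have hR2 := hQk'.2 h hhk
          unfold R2S at hR2
          have hC := hCS (k' - h) (Nat.sub_le k' h)
          unfold CS at hC
          have i2 : k' + 1 - h = k' - h + 1 := by omega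
          rw [i2, psi_succ (show h ≤ k' + 1 by omega)]
          conv_lhs => rw [hR2]
          rw [show psi h k' ++ U k' ++ (psi (k' - h) k').reverse
                ++ psi (h + 1) (k' + 1)
              = psi h k' ++ (U k' ++ (psi (k' - h) k').reverse)
                ++ psi (h + 1) (k' + 1) by simp [List.append_assoc]]
          rw [phiW_append, phiW_append, hC, ← psi_succ hhk,
            ← psi_succ (show h + 1 ≤ k' + 1 by omega)]
          simp [List.append_assoc]
        · -- h = k' + 1
          have : h = k' + 1 := by omega
          subst this
          unfold R2S
          rw [psi_succ (le_refl (k' + 1)), psi_self, phiW_singleton, phi_struct,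
            Nat.sub_self, psi_self]
          have hG : (psi 0 (k' + 1)).reverse = [k' + 1] ++ U (k' + 1) := hGood
          rw [hG]
          simp [List.append_assoc]

end SPAux

open SPAux in
/-- Moving the last letter of ψ(0,k) to the front yields the reversal of ψ(0,k). -/
theorem sInv_psi_eq_reverse (k : ℕ) : sInv (psi 0 k) = (psi 0 k).reverse := by
  have hQ := Q_main k
  rw [W_eq k, sInv_concat]
  simp [List.reverse_append, Upal hQ.1]
end

section
/- The morphism φ commutes with its reversed morphism φ_R: for every finite word w over ℕ, φ(φ_R(w)) = φ_R(φ(w)), where φ_R = R ∘ φ ∘ R. -/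
/-- The reversed morphism φ_R = R ∘ φ ∘ R, sending each letter c to the reversal
of φ(c). -/
def phiR (w : List ℕ) : List ℕ := (phiW w.reverse).reverse

namespace PhiComm

lemma applyM_nil (f : ℕ → List ℕ) : applyM f [] = [] := rfl

lemma applyM_cons (f : ℕ → List ℕ) (c : ℕ) (w : List ℕ) :
    applyM f (c :: w) = f c ++ applyM f w := by simp [applyM]

lemma applyM_append (f : ℕ → List ℕ) (u v : List ℕ) :
    applyM f (u ++ v) = applyM f u ++ applyM f v := by simp [applyM]

lemma applyM_singleton (f : ℕ → List ℕ) (c : ℕ) : applyM f [c] = f c := by simp [applyM]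

lemma applyM_congr {f g : ℕ → List ℕ} {w : List ℕ} (h : ∀ d ∈ w, f d = g d) :
    applyM f w = applyM g w := by
  unfold applyM; rw [List.map_congr_left h]

lemma applyM_applyM (f h : ℕ → List ℕ) (w : List ℕ) :
    applyM f (applyM h w) = applyM (fun c => applyM f (h c)) w := by
  induction w with
  | nil => rfl
  | cons c t ih => rw [applyM_cons, applyM_append, applyM_cons, ih]

lemma applyM_reverse (f : ℕ → List ℕ) (w : List ℕ) :
    applyM (fun c => (f c).reverse) w.reverse = (applyM f w).reverse := by
  induction w with
  | nil => rfl
  | cons c t ih =>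
    rw [List.reverse_cons, applyM_append, applyM_singleton, ih, applyM_cons,
      List.reverse_append]

lemma sInv_concat (l : List ℕ) (c : ℕ) : sInv (l ++ [c]) = c :: l := by
  unfold sInv
  have hlen : (l ++ [c]).length - 1 = l.length := by simp
  rw [hlen, List.rotate_eq_drop_append_take (by simp)]
  simp

/-- The word φ^c(00). -/
def A (c : ℕ) : List ℕ := (applyM phi)^[c] [0, 0]

lemma A_succ (c : ℕ) : A (c + 1) = applyM phi (A c) := Function.iterate_succ_apply' _ _ _

lemma fuel_letters : ∀ c : ℕ,
    (∀ n, c ≤ n → (applyM (phiAux n))^[c] [0, 0] = A c) ∧ (∀ d ∈ A c, d ≤ c) := by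
  intro c
  induction c using Nat.strong_induction_on with
  | _ c IH =>
    have hAux : ∀ d, d < c → ∀ n, d < n → phiAux n d = phi d := by
      intro d hd n hn
      cases n with
      | zero => omega
      | succ m =>
        show sInv ((applyM (phiAux m))^[d] [0, 0]) ++ [d + 1] = phi d
        rw [(IH d hd).1 m (by omega)]
        show _ = sInv ((applyM (phiAux d))^[d] [0, 0]) ++ [d + 1]
        rw [(IH d hd).1 d le_rfl]
    constructor
    · intro n hn
      cases c with
      | zero => rfl
      | succ k =>
        rw [Function.iterate_succ_apply', (IH k (by omega)).1 n (by omega), A_succ]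
        exact applyM_congr fun d hd => hAux d (by have := (IH k (by omega)).2 d hd; omega)
          n (by have := (IH k (by omega)).2 d hd; omega)
    · cases c with
      | zero =>
        intro d hd
        simp [A] at hd
        omega
      | succ k =>
        intro d hd
        rw [A_succ] at hd
        unfold applyM at hd
        rw [List.mem_flatten] at hd
        obtain ⟨l, hl, hdl⟩ := hd
        rw [List.mem_map] at hl
        obtain ⟨e, he, rfl⟩ := hl
        have hek : e ≤ k := (IH k (by omega)).2 e he
        have hphie : phi e = sInv (A e) ++ [e + 1] := by
          show sInv ((applyM (phiAux e))^[e] [0, 0]) ++ [e + 1] = _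
          rw [(IH e (by omega)).1 e le_rfl]
        rw [hphie, List.mem_append] at hdl
        rcases hdl with h | h
        · have hmem : d ∈ A e := (List.mem_rotate).1 h
          have := (IH e (by omega)).2 d hmem
          omega
        · simp at h; omega

lemma phi_eq (c : ℕ) : phi c = sInv (A c) ++ [c + 1] := by
  show sInv ((applyM (phiAux c))^[c] [0, 0]) ++ [c + 1] = _
  rw [(fuel_letters c).1 c le_rfl]

lemma A_decomp : ∀ c : ℕ, A c = (A c).dropLast ++ [c] := by
  intro c
  induction c with
  | zero => rfl
  | succ k ih =>
    have h : A (k + 1) = (applyM phi (A k).dropLast ++ sInv (A k)) ++ [k + 1] := by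
      rw [A_succ]
      conv_lhs => rw [ih]
      rw [applyM_append, applyM_singleton, phi_eq, List.append_assoc]
    rw [h, List.dropLast_concat]

lemma sInv_A (c : ℕ) : sInv (A c) = c :: (A c).dropLast := by
  conv_lhs => rw [A_decomp c]
  exact sInv_concat _ _

lemma D_rec (c : ℕ) :
    (A (c + 1)).dropLast = applyM phi ((A c).dropLast) ++ (c :: (A c).dropLast) := by
  have h : A (c + 1) = (applyM phi (A c).dropLast ++ (c :: (A c).dropLast)) ++ [c + 1] := by
    rw [A_succ]
    conv_lhs => rw [A_decomp c]
    rw [applyM_append, applyM_singleton, phi_eq, sInv_A, List.append_assoc]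
  rw [h, List.dropLast_concat]

/-- The letter map of the reversed morphism. -/
def gR (c : ℕ) : List ℕ := (phi c).reverse

/-- u_c := reverse of A_c with its last letter removed. -/
def uW (c : ℕ) : List ℕ := ((A c).dropLast).reverse

lemma uW_reverse (c : ℕ) : (uW c).reverse = (A c).dropLast := by simp [uW]

lemma phi_form (c : ℕ) : phi c = c :: ((uW c).reverse ++ [c + 1]) := by
  rw [phi_eq, sInv_A, uW_reverse]; rfl

lemma gR_form (c : ℕ) : gR c = (c + 1) :: (uW c ++ [c]) := by
  rw [gR, phi_form]
  simp [uW]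

lemma applyM_gR_reverse (w : List ℕ) :
    applyM gR w.reverse = (applyM phi w).reverse := by
  rw [← applyM_reverse phi w]; rfl

lemma applyM_phi_reverse (w : List ℕ) :
    applyM phi w.reverse = (applyM gR w).reverse := by
  rw [← applyM_reverse gR w]
  exact applyM_congr fun d _ => by simp [gR]

lemma u_rec (c : ℕ) : uW (c + 1) = uW c ++ (c :: applyM gR (uW c)) := by
  unfold uW
  rw [D_rec, List.reverse_append, List.reverse_cons, ← uW_reverse, applyM_gR_reverse]
  simp [uW]

lemma mem_u_le {c d : ℕ} (h : d ∈ uW c) : d ≤ c := by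
  unfold uW at h
  rw [List.mem_reverse] at h
  exact (fuel_letters c).2 d ((List.dropLast_sublist _).mem h)

/-- The key palindromic identity ★_c. -/
def StarEq (c : ℕ) : Prop :=
  applyM phi (uW c) ++ (c :: (uW c).reverse) = uW c ++ (c :: applyM gR (uW c))

lemma comm_of_star {c : ℕ} (hs : StarEq c) :
    applyM phi (gR c) = applyM gR (phi c) := by
  have hu := u_rec c
  have hustar : uW (c + 1) = applyM phi (uW c) ++ (c :: (uW c).reverse) := by
    rw [hu]; exact hs.symm
  -- reversal of ★_c
  have key : ∀ t : List ℕ,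
      uW c ++ (c :: ((applyM phi (uW c)).reverse ++ t)) =
      applyM phi ((uW c).reverse) ++ (c :: ((uW c).reverse ++ t)) := by
    intro t
    have h := congrArg (fun l => l.reverse ++ t) hs
    simp only [List.reverse_append, List.reverse_cons, List.reverse_reverse,
      List.append_assoc, List.cons_append, List.singleton_append, List.nil_append] at h
    rw [applyM_phi_reverse]
    simpa using h
  have hphis : phi (c + 1) =
      (c + 1) :: (applyM phi ((uW c).reverse) ++ (c :: ((uW c).reverse ++ [c + 2]))) := by
    rw [phi_form, hu]
    simp only [List.reverse_append, List.reverse_cons, List.append_assoc,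
      List.cons_append, List.singleton_append, List.nil_append, ← applyM_phi_reverse]
  have hgrs : gR (c + 1) =
      (c + 2) :: (applyM phi (uW c) ++ (c :: ((uW c).reverse ++ [c + 1]))) := by
    rw [gR_form, hustar]
    simp only [List.append_assoc, List.cons_append, List.singleton_append]
  rw [gR_form c, phi_form c]
  simp only [applyM_cons, applyM_append, applyM_singleton, applyM_nil, List.append_nil]
  rw [phi_form c, gR_form c, hphis, hgrs, applyM_gR_reverse]
  simp only [List.reverse_append, List.reverse_cons, List.reverse_reverse,
    List.append_assoc, List.cons_append, List.singleton_append, List.nil_append,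
    List.append_nil, List.map_nil, List.flatten_nil]
  rw [key]

lemma star : ∀ c : ℕ, StarEq c := by
  intro c
  induction c using Nat.strong_induction_on with
  | _ c IH =>
    cases c with
    | zero =>
      show applyM phi (uW 0) ++ _ = _
      have hu : uW 0 = [0] := rfl
      rw [hu]
      decide
    | succ k =>
      have hs : StarEq k := IH k (by omega)
      have hcomm : ∀ d ∈ uW k, applyM phi (gR d) = applyM gR (phi d) := fun d hd =>
        comm_of_star (IH d (by have := mem_u_le hd; omega))
      have commW : applyM phi (applyM gR (uW k)) = applyM gR (applyM phi (uW k)) := by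
        rw [applyM_applyM, applyM_applyM]
        exact applyM_congr hcomm
      have hu := u_rec k
      have keyG : applyM gR (applyM phi (uW k)) ++
            ((k + 1) :: (uW k ++ (k :: (applyM phi (uW k)).reverse))) =
          applyM gR (uW k) ++
            ((k + 1) :: (uW k ++ (k :: applyM gR (applyM gR (uW k))))) := by
        have h := congrArg (applyM gR) hs
        simp only [applyM_append, applyM_cons, gR_form, applyM_gR_reverse,
          List.append_assoc, List.cons_append, List.singleton_append] at h
        simpa using h
      show applyM phi (uW (k + 1)) ++ ((k + 1) :: (uW (k + 1)).reverse) =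
        uW (k + 1) ++ ((k + 1) :: applyM gR (uW (k + 1)))
      rw [hu]
      nth_rewrite 2 3 [← hs]
      rw [applyM_append, applyM_cons, applyM_append, applyM_cons, commW,
        phi_form k, gR_form k]
      simp only [List.reverse_append, List.reverse_cons, List.reverse_reverse,
        List.append_assoc, List.cons_append, List.singleton_append, List.nil_append]
      rw [keyG]

lemma comm (c : ℕ) : applyM phi (gR c) = applyM gR (phi c) := comm_of_star (star c)

lemma phiR_eq (w : List ℕ) : phiR w = applyM gR w := by
  unfold phiR phiW
  rw [← applyM_gR_reverse, List.reverse_reverse]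

end PhiComm

/-- φ commutes with its reversed morphism φ_R. -/
theorem phi_commutes_phiR (w : List ℕ) : phiW (phiR w) = phiR (phiW w) := by
  rw [PhiComm.phiR_eq, PhiComm.phiR_eq]
  unfold phiW
  rw [PhiComm.applyM_applyM, PhiComm.applyM_applyM]
  exact PhiComm.applyM_congr fun d _ => PhiComm.comm d
end
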